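/- arXiv:1701.03843 — 2 statements merged into one kernel-verified Lean document; each statement's English description precedes it below -/
import Mathlib

section
/- Let 1 ≤ p ≤ q < ∞ and let Λ, Γ be Waterman sequences. Then ΛBV^{(p)} ⊆ ΓBV^{(q)} if and only if sup_{n≥1} Γ(n)^{1/q} / Λ(n)^{1/p} < ∞. -/
/-
Sufficiency. Rearranging the oscillations `a_j = |f(I_j)|` of a system of intervals decreasingly
can only increase `∑ a_j^q / γ_j`, because `1 / γ_j` decreases. For decreasing `a`, Abel summation
turns `Γ(n) ≤ M^q Λ(n)^(q/p)` into `∑ a_j^q / γ_j ≤ M^q ∑ a_j^q (Λ(j+1)^(q/p) - Λ(j)^(q/p))`, and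
convexity of `t ↦ t^(q/p)` bounds the right-hand side by `M^q (∑ a_j^p / λ_j)^(q/p)`.

Necessity. If the ratio is unbounded, choose `N_k` where it exceeds a suitable multiple of `k + 1`
and let `f` have `N_k` spikes of height `H_k = (2^(-k) / Λ(N_k))^(1/p)` at level `k`. The left
endpoints of a nonoverlapping system are pairwise distinct, and so are the right endpoints, hence
each spike is charged at most twice and `f ∈ ΛBV^(p)`; but the `N_k` intervals ending at the spikes
of level `k` give `H_k^q Γ(N_k) > k + 1` in `ΓBV^(q)`.
-/

open Finset Filter

lemma ConvexOn.map_add_sub_map_le_map_add_sub_map {s : Set ℝ} {f : ℝ → ℝ} (hf : ConvexOn ℝ s f)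
    {x y d : ℝ} (hx : x ∈ s) (hyd : y + d ∈ s) (hxy : x ≤ y) (hd : 0 ≤ d) :
    f (x + d) - f x ≤ f (y + d) - f y := by
  rcases (by linarith : (0 : ℝ) ≤ y + d - x).eq_or_lt with hL | hL
  · obtain ⟨rfl, rfl⟩ : y = x ∧ d = 0 := by constructor <;> linarith
    rfl
  -- `x + d` and `y` are the convex combinations of `x` and `y + d` with swapped weights.
  set t := d / (y + d - x)
  have ht0 : 0 ≤ t := div_nonneg hd hL.le
  have ht1 : t ≤ 1 := (div_le_one hL).2 (by linarith)
  have h₁ := hf.2 hx hyd (sub_nonneg.2 ht1) ht0 (sub_add_cancel 1 t)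
  have h₂ := hf.2 hx hyd ht0 (sub_nonneg.2 ht1) (add_sub_cancel t 1)
  have e₁ : (1 - t) • x + t • (y + d) = x + d := by
    simp only [smul_eq_mul, t]; field_simp; ring
  have e₂ : t • x + (1 - t) • (y + d) = y := by
    simp only [smul_eq_mul, t]; field_simp; ring
  rw [e₁] at h₁
  rw [e₂] at h₂
  simp only [smul_eq_mul] at h₁ h₂
  linarith

lemma sum_range_mul_le_sum_range_mul_of_antitone {c x y : ℕ → ℝ} {n : ℕ} (hc : Antitone c)
    (hc0 : ∀ j, 0 ≤ c j) (hxy : ∀ m ≤ n, ∑ j ∈ range m, x j ≤ ∑ j ∈ range m, y j) :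
    ∑ j ∈ range n, c j * x j ≤ ∑ j ∈ range n, c j * y j := by
  suffices key : ∀ m ≤ n, c m * ∑ j ∈ range m, (y j - x j) ≤ ∑ j ∈ range m, c j * (y j - x j) by
    have := (mul_nonneg (hc0 n) (sub_nonneg.2 (hxy n le_rfl))).trans
      (by simpa only [sum_sub_distrib] using key n le_rfl)
    simpa only [mul_sub, sum_sub_distrib, sub_nonneg] using this
  intro m hm
  induction m with
  | zero => simp
  | succ m ih =>
    have hD : 0 ≤ ∑ j ∈ range (m + 1), (y j - x j) := by
      rw [sum_sub_distrib, sub_nonneg]; exact hxy _ hm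
    calc c (m + 1) * ∑ j ∈ range (m + 1), (y j - x j)
        ≤ c m * ∑ j ∈ range (m + 1), (y j - x j) := mul_le_mul_of_nonneg_right (hc m.le_succ) hD
      _ ≤ ∑ j ∈ range (m + 1), c j * (y j - x j) := by
        rw [sum_range_succ, sum_range_succ, mul_add]
        linarith [ih (by omega)]

lemma sum_rpow_mul_sub_rpow_le_rpow_sum {b w : ℕ → ℝ} {r : ℝ} (hr : 1 ≤ r) (hb : Antitone b)
    (hb0 : ∀ j, 0 ≤ b j) (hw : ∀ j, 0 ≤ w j) (n : ℕ) :
    ∑ j ∈ range n, b j ^ r * ((∑ i ∈ range (j + 1), w i) ^ r - (∑ i ∈ range j, w i) ^ r)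
      ≤ (∑ j ∈ range n, b j * w j) ^ r := by
  induction n with
  | zero => simp [Real.zero_rpow (by linarith : r ≠ 0)]
  | succ n ih =>
    have hW : 0 ≤ ∑ i ∈ range n, w i := sum_nonneg fun i _ => hw i
    have hbW : b n * ∑ i ∈ range n, w i ≤ ∑ j ∈ range n, b j * w j := by
      rw [mul_sum]
      exact sum_le_sum fun i hi =>
        mul_le_mul_of_nonneg_right (hb (mem_range.1 hi).le) (hw i)
    have hstep := (convexOn_rpow hr).map_add_sub_map_le_map_add_sub_map
      (Set.mem_Ici.2 (mul_nonneg (hb0 n) hW))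
      (Set.mem_Ici.2 (add_nonneg (sum_nonneg fun j _ => mul_nonneg (hb0 j) (hw j))
        (mul_nonneg (hb0 n) (hw n)))) hbW (mul_nonneg (hb0 n) (hw n))
    rw [← mul_add, ← sum_range_succ, Real.mul_rpow (hb0 n) hW,
      Real.mul_rpow (hb0 n) (sum_nonneg fun i _ => hw i),
      ← sum_range_succ (fun j => b j * w j)] at hstep
    rw [sum_range_succ, mul_sub]
    linarith

lemma sum_rpow_mul_le_rpow_sum_of_partial_sums {a v w : ℕ → ℝ} {p q C : ℝ} (hp : 0 < p)
    (hpq : p ≤ q) (ha : Antitone a) (ha0 : ∀ j, 0 ≤ a j) (hw : ∀ j, 0 ≤ w j) (hC : 0 ≤ C)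
    (hvw : ∀ m, ∑ j ∈ range m, v j ≤ C * (∑ j ∈ range m, w j) ^ (q / p)) (n : ℕ) :
    ∑ j ∈ range n, a j ^ q * v j ≤ C * (∑ j ∈ range n, a j ^ p * w j) ^ (q / p) := by
  set W : ℕ → ℝ := fun m => (∑ j ∈ range m, w j) ^ (q / p)
  have hW0 : W 0 = 0 := by simp [W, Real.zero_rpow (div_pos (hp.trans_le hpq) hp).ne']
  have hpow : ∀ j, a j ^ q = (a j ^ p) ^ (q / p) := fun j => by
    rw [← Real.rpow_mul (ha0 j), mul_div_cancel₀ _ hp.ne']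
  calc ∑ j ∈ range n, a j ^ q * v j
      ≤ ∑ j ∈ range n, a j ^ q * (C * (W (j + 1) - W j)) := by
        refine sum_range_mul_le_sum_range_mul_of_antitone
          (fun i j hij => Real.rpow_le_rpow (ha0 j) (ha hij) (hp.le.trans hpq))
          (fun j => Real.rpow_nonneg (ha0 j) q) fun m _ => ?_
        rw [← mul_sum, sum_range_sub, hW0, sub_zero]
        exact hvw m
    _ = C * ∑ j ∈ range n, (a j ^ p) ^ (q / p) * (W (j + 1) - W j) := by
        rw [mul_sum]; exact sum_congr rfl fun j _ => by rw [hpow]; ring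
    _ ≤ C * (∑ j ∈ range n, a j ^ p * w j) ^ (q / p) :=
        mul_le_mul_of_nonneg_left (sum_rpow_mul_sub_rpow_le_rpow_sum ((one_le_div hp).2 hpq)
          (fun i j hij => Real.rpow_le_rpow (ha0 j) (ha hij) hp.le)
          (fun j => Real.rpow_nonneg (ha0 j) p) hw n) hC

def MemWatermanBV (lam : ℕ → ℝ) (p : ℝ) (f : ℝ → ℝ) : Prop :=
  ∃ V : ℝ, ∀ (s : ℕ) (u v : Fin s → ℝ),
    (∀ j, 0 ≤ u j ∧ u j < v j ∧ v j ≤ 1) →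
    (∀ i j, i ≠ j → Set.Ioo (u i) (v i) ∩ Set.Ioo (u j) (v j) = ∅) →
    ∑ j, |f (v j) - f (u j)| ^ p / lam (j : ℕ) ≤ V

lemma exists_perm_antitone_comp {α : Type*} [LinearOrder α] {s : ℕ} (d : Fin s → α) :
    ∃ σ : Equiv.Perm (Fin s), Antitone (d ∘ σ) :=
  ⟨Tuple.sort (OrderDual.toDual ∘ d), Tuple.monotone_sort (OrderDual.toDual ∘ d)⟩

lemma sum_mul_le_sum_comp_perm_mul {s : ℕ} {d g : Fin s → ℝ} {σ : Equiv.Perm (Fin s)}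
    (hd : Antitone (d ∘ σ)) (hg : Antitone g) :
    ∑ j, d j * g j ≤ ∑ j, d (σ j) * g j := by
  simpa [smul_eq_mul] using (hd.monovary hg).sum_comp_perm_smul_le_sum_smul (σ := σ⁻¹)

lemma MemWatermanBV.of_partial_sums_le {lam gam : ℕ → ℝ} {p q C : ℝ} {f : ℝ → ℝ}
    (hlam : ∀ j, 0 ≤ lam j) (hgam : ∀ j, 0 < gam j) (hgammono : Monotone gam)
    (hp : 0 < p) (hpq : p ≤ q) (hC : 0 ≤ C)
    (hΓΛ : ∀ n, ∑ j ∈ range n, 1 / gam j ≤ C * (∑ j ∈ range n, 1 / lam j) ^ (q / p))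
    (hf : MemWatermanBV lam p f) : MemWatermanBV gam q f := by
  obtain ⟨V, hV⟩ := hf
  refine ⟨C * V ^ (q / p), fun s u v hval hdisj => ?_⟩
  set d : Fin s → ℝ := fun j => |f (v j) - f (u j)|
  obtain ⟨σ, hσ⟩ := exists_perm_antitone_comp d
  -- the decreasing rearrangement of `d`, extended by zero
  set a : ℕ → ℝ := fun n => if h : n < s then d (σ ⟨n, h⟩) else 0
  have ha0 : ∀ n, 0 ≤ a n := fun n => by
    simp only [a]; split_ifs <;> simp [d]
  have ha : Antitone a := fun m n hmn => by
    simp only [a]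
    split_ifs with hn hm hm
    · exact hσ (Fin.mk_le_mk.2 hmn)
    · omega
    · exact abs_nonneg _
    · rfl
  have hsum : ∀ g : ℝ → ℕ → ℝ, ∑ j ∈ range s, g (a j) j = ∑ j : Fin s, g (d (σ j)) j := by
    intro g; rw [← Fin.sum_univ_eq_sum_range]; simp [a]
  have hVσ : ∑ j : Fin s, d (σ j) ^ p / lam j ≤ V :=
    hV s (u ∘ σ) (v ∘ σ) (fun j => hval (σ j)) fun i j hij => hdisj _ _ (σ.injective.ne hij)
  have hγ : Antitone fun j : Fin s => 1 / gam j := fun i j hij =>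
    one_div_le_one_div_of_le (hgam i) (hgammono hij)
  calc ∑ j, d j ^ q / gam j = ∑ j, d j ^ q * (1 / gam j) := by simp only [mul_one_div]
    _ ≤ ∑ j, d (σ j) ^ q * (1 / gam j) :=
        sum_mul_le_sum_comp_perm_mul (fun i j hij => Real.rpow_le_rpow (abs_nonneg _) (hσ hij)
          (hp.le.trans hpq)) hγ
    _ = ∑ j ∈ range s, a j ^ q * (1 / gam j) := (hsum fun x j => x ^ q * (1 / gam j)).symm
    _ ≤ C * (∑ j ∈ range s, a j ^ p * (1 / lam j)) ^ (q / p) :=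
        sum_rpow_mul_le_rpow_sum_of_partial_sums hp hpq ha ha0
          (fun j => one_div_nonneg.2 (hlam j)) hC hΓΛ s
    _ ≤ C * V ^ (q / p) := by
        rw [hsum fun x j => x ^ p * (1 / lam j)]
        simp only [mul_one_div]
        gcongr
        · exact sum_nonneg fun j _ => div_nonneg (Real.rpow_nonneg (abs_nonneg _) p) (hlam j)
        · exact div_nonneg (hp.le.trans hpq) hp.le

lemma partial_sums_le_of_ratio_le {lam gam : ℕ → ℝ} {p q M : ℝ} (hlam : ∀ j, 0 < lam j)
    (hgam : ∀ j, 0 < gam j) (hq : 0 < q)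
    (hM : ∀ n : ℕ, 1 ≤ n →
      (∑ j ∈ range n, 1 / gam j) ^ (1 / q) / (∑ j ∈ range n, 1 / lam j) ^ (1 / p) ≤ M) :
    0 ≤ M ∧ ∀ n, ∑ j ∈ range n, 1 / gam j ≤ M ^ q * (∑ j ∈ range n, 1 / lam j) ^ (q / p) := by
  have hΓ : ∀ n, 0 ≤ ∑ j ∈ range n, 1 / gam j := fun n =>
    sum_nonneg fun j _ => (one_div_pos.2 (hgam j)).le
  have hΛ : ∀ n, 1 ≤ n → 0 < ∑ j ∈ range n, 1 / lam j := fun n hn =>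
    sum_pos (fun j _ => one_div_pos.2 (hlam j)) ⟨0, mem_range.2 hn⟩
  have hM0 : 0 ≤ M := (div_nonneg (Real.rpow_nonneg (hΓ 1) _)
    (Real.rpow_nonneg (hΛ 1 le_rfl).le _)).trans (hM 1 le_rfl)
  refine ⟨hM0, fun n => ?_⟩
  rcases Nat.eq_zero_or_pos n with rfl | hn
  · simpa using mul_nonneg (Real.rpow_nonneg hM0 q) (Real.rpow_nonneg le_rfl (q / p))
  have h := (div_le_iff₀ (Real.rpow_pos_of_pos (hΛ n hn) _)).1 (hM n hn)
  calc ∑ j ∈ range n, 1 / gam j = ((∑ j ∈ range n, 1 / gam j) ^ (1 / q)) ^ q := by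
        rw [← Real.rpow_mul (hΓ n), one_div_mul_cancel hq.ne', Real.rpow_one]
    _ ≤ (M * (∑ j ∈ range n, 1 / lam j) ^ (1 / p)) ^ q :=
        Real.rpow_le_rpow (Real.rpow_nonneg (hΓ n) _) h hq.le
    _ = M ^ q * (∑ j ∈ range n, 1 / lam j) ^ (q / p) := by
        rw [Real.mul_rpow hM0 (Real.rpow_nonneg (hΛ n hn).le _), ← Real.rpow_mul (hΛ n hn).le,
          one_div_mul_eq_div]

/-- The spike with index `(k, i)` sits at `1 / m` for the odd number `m = 2 ⟪k, i⟫ + 1`, so that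
the gap point `1 / (m + 1)` to its left carries no spike. -/
noncomputable def spikePoint (k i : ℕ) : ℝ := ((2 * Nat.pair k i + 1 : ℕ) : ℝ)⁻¹

noncomputable def gapPoint (k i : ℕ) : ℝ := (((2 * Nat.pair k i + 1 : ℕ) : ℝ) + 1)⁻¹

noncomputable def spikeSet (N : ℕ → ℕ) (k : ℕ) : Finset ℝ := (range (N k)).image (spikePoint k)

noncomputable def spikeFun (N : ℕ → ℕ) (H : ℕ → ℝ) (x : ℝ) : ℝ :=
  open Classical in
  if h : ∃ k, x ∈ spikeSet N k then H h.choose else 0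

lemma inv_natCast_injective : Function.Injective fun n : ℕ => (n : ℝ)⁻¹ := fun m n h => by
  simpa using h

lemma spikePoint_eq_spikePoint {k i k' i' : ℕ} (h : spikePoint k i = spikePoint k' i') :
    k = k' ∧ i = i' := by
  have := inv_natCast_injective h
  exact Nat.pair_eq_pair.1 (by omega)

lemma spikeSet_disjoint {N : ℕ → ℕ} {k k' : ℕ} {x : ℝ} (hk : x ∈ spikeSet N k)
    (hk' : x ∈ spikeSet N k') : k = k' := by
  obtain ⟨i, -, rfl⟩ := mem_image.1 hk
  obtain ⟨i', -, h⟩ := mem_image.1 hk'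
  exact (spikePoint_eq_spikePoint h).1.symm

lemma spikeFun_of_mem {N : ℕ → ℕ} {H : ℕ → ℝ} {k : ℕ} {x : ℝ} (hx : x ∈ spikeSet N k) :
    spikeFun N H x = H k := by
  have h : ∃ k, x ∈ spikeSet N k := ⟨k, hx⟩
  rw [spikeFun, dif_pos h, spikeSet_disjoint h.choose_spec hx]

lemma spikeFun_of_forall_notMem {N : ℕ → ℕ} {H : ℕ → ℝ} {x : ℝ} (hx : ∀ k, x ∉ spikeSet N k) :
    spikeFun N H x = 0 := by
  rw [spikeFun, dif_neg (not_exists.2 hx)]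

lemma spikeFun_nonneg {N : ℕ → ℕ} {H : ℕ → ℝ} (hH : ∀ k, 0 ≤ H k) (x : ℝ) :
    0 ≤ spikeFun N H x := by
  unfold spikeFun; split_ifs
  exacts [hH _, le_rfl]

lemma spikePoint_mem_spikeSet {N : ℕ → ℕ} {k i : ℕ} (hi : i < N k) :
    spikePoint k i ∈ spikeSet N k :=
  mem_image_of_mem _ (mem_range.2 hi)

lemma injective_left_right_of_Ioo_inter_eq_empty {ι : Type*} {u v : ι → ℝ}
    (huv : ∀ j, u j < v j) (hdisj : ∀ i j, i ≠ j → Set.Ioo (u i) (v i) ∩ Set.Ioo (u j) (v j) = ∅) :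
    Function.Injective u ∧ Function.Injective v := by
  refine ⟨fun i j h => ?_, fun i j h => ?_⟩ <;> by_contra hij <;>
    have := hdisj i j hij <;> rw [Set.Ioo_inter_Ioo, Set.Ioo_eq_empty_iff] at this <;> apply this
  · rw [h, max_self]; exact lt_min (h ▸ huv i) (huv j)
  · rw [h, min_self]; exact max_lt (h ▸ huv i) (huv j)

lemma Antitone.sum_le_sum_range_card {β : Type*} [AddCommMonoid β] [PartialOrder β]
    [IsOrderedAddMonoid β] {g : ℕ → β} (hg : Antitone g) (A : Finset ℕ) :
    ∑ j ∈ A, g j ≤ ∑ j ∈ range #A, g j := by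
  induction A using Finset.induction_on_max with
  | empty => simp
  | insert a A ha ih =>
    have hA : #A ≤ a := by simpa using card_le_card (fun x hx => mem_range.2 (ha x hx))
    rw [sum_insert fun h => (ha a h).false, card_insert_of_notMem fun h => (ha a h).false,
      sum_range_succ, add_comm]
    exact add_le_add ih (hg hA)

lemma sum_filter_mem_one_div_le {lam : ℕ → ℝ} (hlam : ∀ j, 0 < lam j) (hlammono : Monotone lam)
    {s : ℕ} {x : Fin s → ℝ} (hx : Function.Injective x) (P : Finset ℝ) :
    ∑ j ∈ univ.filter (fun j => x j ∈ P), 1 / lam j ≤ ∑ j ∈ range #P, 1 / lam j := by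
  set A := univ.filter (fun j => x j ∈ P)
  have hA : #A ≤ #P := card_le_card_of_injOn x (fun j hj => (mem_filter.1 hj).2) hx.injOn
  calc ∑ j ∈ A, 1 / lam j = ∑ m ∈ A.map Fin.valEmbedding, 1 / lam m :=
        (sum_map A Fin.valEmbedding fun m => 1 / lam m).symm
    _ ≤ ∑ m ∈ range #(A.map Fin.valEmbedding), 1 / lam m :=
        Antitone.sum_le_sum_range_card (fun i j hij =>
          one_div_le_one_div_of_le (hlam i) (hlammono hij)) _
    _ ≤ ∑ m ∈ range #P, 1 / lam m :=
        sum_le_sum_of_subset_of_nonneg (range_subset_range.2 (by simpa using hA))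
          fun j _ _ => (one_div_pos.2 (hlam j)).le

lemma sum_spikeFun_rpow_div_le {lam H : ℕ → ℝ} {N : ℕ → ℕ} {p : ℝ} (hlam : ∀ j, 0 < lam j)
    (hlammono : Monotone lam) (hp : p ≠ 0) (hH0 : ∀ k, 0 ≤ H k)
    (hH : ∀ k, H k ^ p * ∑ j ∈ range (N k), 1 / lam j ≤ (1 / 2) ^ k)
    {s : ℕ} {x : Fin s → ℝ} (hx : Function.Injective x) :
    ∑ j, spikeFun N H (x j) ^ p / lam j ≤ 2 := by
  classical
  have hlevel : ∀ j, ∃ k, spikeFun N H (x j) ^ p / lam j ≤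
      if x j ∈ spikeSet N k then H k ^ p * (1 / lam j) else 0 := fun j => by
    by_cases h : ∃ k, x j ∈ spikeSet N k
    · obtain ⟨k, hk⟩ := h
      exact ⟨k, by rw [if_pos hk, spikeFun_of_mem hk, mul_one_div]⟩
    · refine ⟨0, ?_⟩
      rw [spikeFun_of_forall_notMem (not_exists.1 h), Real.zero_rpow hp, zero_div]
      split_ifs
      exacts [mul_nonneg (Real.rpow_nonneg (hH0 0) p) (one_div_pos.2 (hlam j)).le, le_rfl]
  choose κ hκ using hlevel
  calc ∑ j, spikeFun N H (x j) ^ p / lam j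
      ≤ ∑ j, ∑ k ∈ univ.image κ, if x j ∈ spikeSet N k then H k ^ p * (1 / lam j) else 0 :=
        sum_le_sum fun j _ => (hκ j).trans (single_le_sum (f := fun k =>
          if x j ∈ spikeSet N k then H k ^ p * (1 / lam j) else 0)
          (fun k _ => by
            split_ifs
            exacts [mul_nonneg (Real.rpow_nonneg (hH0 k) p) (one_div_pos.2 (hlam j)).le, le_rfl])
          (mem_image_of_mem κ (mem_univ j)))
    _ = ∑ k ∈ univ.image κ,
          H k ^ p * ∑ j ∈ univ.filter (fun j => x j ∈ spikeSet N k), 1 / lam j := by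
        rw [sum_comm]
        simp only [mul_sum, sum_filter, mul_ite, mul_zero]
    _ ≤ ∑ k ∈ univ.image κ, (1 / 2 : ℝ) ^ k := sum_le_sum fun k _ =>
        (mul_le_mul_of_nonneg_left ((sum_filter_mem_one_div_le hlam hlammono hx _).trans
          (sum_le_sum_of_subset_of_nonneg (range_subset_range.2 (card_image_le.trans_eq
            (card_range _))) fun j _ _ => (one_div_pos.2 (hlam j)).le))
          (Real.rpow_nonneg (hH0 k) p)).trans (hH k)
    _ ≤ 2 := (summable_geometric_two.sum_le_tsum _ fun k _ => by positivity).trans_eq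
        tsum_geometric_two

lemma memWatermanBV_spikeFun {lam H : ℕ → ℝ} {N : ℕ → ℕ} {p : ℝ} (hlam : ∀ j, 0 < lam j)
    (hlammono : Monotone lam) (hp : 0 < p) (hH0 : ∀ k, 0 ≤ H k)
    (hH : ∀ k, H k ^ p * ∑ j ∈ range (N k), 1 / lam j ≤ (1 / 2) ^ k) :
    MemWatermanBV lam p (spikeFun N H) := by
  refine ⟨4, fun s u v hval hdisj => ?_⟩
  obtain ⟨hu, hv⟩ := injective_left_right_of_Ioo_inter_eq_empty (fun j => (hval j).2.1) hdisj
  set f := spikeFun N H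
  have hf := spikeFun_nonneg (N := N) hH0
  have hdiff : ∀ j, |f (v j) - f (u j)| ^ p ≤ f (u j) ^ p + f (v j) ^ p := fun j => by
    have hu0 := hf (u j)
    have hv0 := hf (v j)
    calc |f (v j) - f (u j)| ^ p ≤ max (f (u j)) (f (v j)) ^ p :=
          Real.rpow_le_rpow (abs_nonneg _) (abs_sub_le_iff.2
            ⟨by linarith [le_max_right (f (u j)) (f (v j))],
              by linarith [le_max_left (f (u j)) (f (v j))]⟩) hp.le
      _ ≤ f (u j) ^ p + f (v j) ^ p := by
          rcases max_choice (f (u j)) (f (v j)) with h | h <;> rw [h] <;>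
            linarith [Real.rpow_nonneg hu0 p, Real.rpow_nonneg hv0 p]
  calc ∑ j, |f (v j) - f (u j)| ^ p / lam j
      ≤ ∑ j, f (u j) ^ p / lam j + ∑ j, f (v j) ^ p / lam j := by
        rw [← sum_add_distrib]
        exact sum_le_sum fun j _ => by rw [← add_div]; gcongr; exacts [(hlam j).le, hdiff j]
    _ ≤ 2 + 2 := add_le_add (sum_spikeFun_rpow_div_le hlam hlammono hp.ne' hH0 hH hu)
        (sum_spikeFun_rpow_div_le hlam hlammono hp.ne' hH0 hH hv)
    _ = 4 := by norm_num

lemma gapPoint_notMem_spikeSet (N : ℕ → ℕ) (k i k' : ℕ) : gapPoint k i ∉ spikeSet N k' := by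
  simp only [spikeSet, mem_image, not_exists, not_and]
  intro i' _ h
  rw [spikePoint, gapPoint, ← Nat.cast_succ] at h
  have := inv_natCast_injective h
  omega

lemma Ioo_inv_add_one_inter_eq_empty {m n : ℕ} (hmn : m < n) :
    Set.Ioo ((m + 1 : ℝ)⁻¹) (m : ℝ)⁻¹ ∩ Set.Ioo ((n + 1 : ℝ)⁻¹) (n : ℝ)⁻¹ = ∅ := by
  rw [Set.Ioo_inter_Ioo, Set.Ioo_eq_empty_iff, not_lt]
  exact (min_le_right _ _).trans
    ((inv_anti₀ (by positivity) (by exact_mod_cast hmn)).trans (le_max_left _ _))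

lemma gapPoint_spikePoint_admissible (N : ℕ → ℕ) (k : ℕ) :
    (∀ i : Fin (N k), 0 ≤ gapPoint k i ∧ gapPoint k i < spikePoint k i ∧ spikePoint k i ≤ 1) ∧
    ∀ i i' : Fin (N k), i ≠ i' →
      Set.Ioo (gapPoint k i) (spikePoint k i) ∩ Set.Ioo (gapPoint k i') (spikePoint k i') = ∅ := by
  simp only [gapPoint, spikePoint]
  refine ⟨fun i => ⟨by positivity, inv_strictAnti₀ (by positivity) (by linarith), ?_⟩,
    fun i i' hii' => ?_⟩
  · exact inv_le_one_of_one_le₀ (by simp)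
  · have hne : 2 * Nat.pair k i + 1 ≠ 2 * Nat.pair k i' + 1 := fun h =>
      hii' (Fin.ext (Nat.pair_eq_pair.1 (by omega : Nat.pair k i = Nat.pair k i')).2)
    rcases hne.lt_or_gt with h | h
    · exact Ioo_inv_add_one_inter_eq_empty h
    · rw [Set.inter_comm]; exact Ioo_inv_add_one_inter_eq_empty h

lemma exists_ratio_le_of_forall_memWatermanBV {lam gam : ℕ → ℝ} {p q : ℝ}
    (hlam : ∀ j, 0 < lam j) (hgam : ∀ j, 0 < gam j) (hlammono : Monotone lam)
    (hp : 0 < p) (hq : 1 ≤ q)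
    (hembed : ∀ f, MemWatermanBV lam p f → MemWatermanBV gam q f) :
    ∃ M : ℝ, ∀ n : ℕ, 1 ≤ n →
      (∑ j ∈ range n, 1 / gam j) ^ (1 / q) / (∑ j ∈ range n, 1 / lam j) ^ (1 / p) ≤ M := by
  by_contra! hunb
  set c : ℕ → ℝ := fun k => ((1 / 2 : ℝ) ^ k) ^ (1 / p)
  have hc : ∀ k, 0 < c k := fun k => by positivity
  choose N hN1 hN using fun k : ℕ => hunb ((k + 1) / c k)
  set Λ : ℕ → ℝ := fun k => ∑ j ∈ range (N k), 1 / lam j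
  set Γ : ℕ → ℝ := fun k => ∑ j ∈ range (N k), 1 / gam j
  have hΛ : ∀ k, 0 < Λ k := fun k =>
    sum_pos (fun j _ => one_div_pos.2 (hlam j)) ⟨0, mem_range.2 (hN1 k)⟩
  have hΓ : ∀ k, 0 ≤ Γ k := fun k => sum_nonneg fun j _ => (one_div_pos.2 (hgam j)).le
  set H : ℕ → ℝ := fun k => ((1 / 2 : ℝ) ^ k / Λ k) ^ (1 / p)
  have hH0 : ∀ k, 0 ≤ H k := fun k => Real.rpow_nonneg (div_nonneg (by positivity) (hΛ k).le) _
  have hH : ∀ k, H k ^ p * Λ k = (1 / 2) ^ k := fun k => by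
    dsimp only [H]
    rw [one_div p, Real.rpow_inv_rpow (div_nonneg (by positivity) (hΛ k).le) hp.ne',
      div_mul_cancel₀ _ (hΛ k).ne']
  obtain ⟨W, hW⟩ := hembed _ (memWatermanBV_spikeFun hlam hlammono hp hH0 fun k => (hH k).le)
  obtain ⟨k, hk⟩ := exists_nat_gt W
  obtain ⟨hval, hdisj⟩ := gapPoint_spikePoint_admissible N k
  have hsum := hW (N k) _ _ hval hdisj
  have hsum_eq : ∑ i : Fin (N k), |spikeFun N H (spikePoint k i) -
      spikeFun N H (gapPoint k i)| ^ q / gam i = H k ^ q * Γ k := by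
    simp only [spikeFun_of_mem (spikePoint_mem_spikeSet (Fin.is_lt _)),
      spikeFun_of_forall_notMem (gapPoint_notMem_spikeSet N k _), sub_zero, abs_of_nonneg (hH0 k),
      Γ, mul_sum, ← Fin.sum_univ_eq_sum_range (fun j => 1 / gam j), mul_one_div]
  have hb : (k : ℝ) + 1 < H k * Γ k ^ (1 / q) :=
    calc (k : ℝ) + 1 < c k * (Γ k ^ (1 / q) / Λ k ^ (1 / p)) := (div_lt_iff₀' (hc k)).1 (hN k)
      _ = H k * Γ k ^ (1 / q) := by
          dsimp only [H, c]
          rw [Real.div_rpow (by positivity) (hΛ k).le]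
          ring
  have hbq : H k * Γ k ^ (1 / q) ≤ H k ^ q * Γ k := by
    calc H k * Γ k ^ (1 / q) ≤ (H k * Γ k ^ (1 / q)) ^ q :=
          Real.self_le_rpow_of_one_le (by linarith [(Nat.cast_nonneg k : (0 : ℝ) ≤ k)]) hq
      _ = H k ^ q * Γ k := by
          rw [Real.mul_rpow (hH0 k) (Real.rpow_nonneg (hΓ k) _), one_div q,
            Real.rpow_inv_rpow (hΓ k) (by linarith)]
  linarith

theorem embedding_constant_exponents_iff_general (lam gam : ℕ → ℝ)
    (hlam : ∀ j, 0 < lam j) (hgam : ∀ j, 0 < gam j)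
    (hlammono : Monotone lam) (hgammono : Monotone gam)
    (p q : ℝ) (hp : 1 ≤ p) (hpq : p ≤ q) :
    (∀ f : ℝ → ℝ,
      (∃ V : ℝ, ∀ (s : ℕ) (u v : Fin s → ℝ),
        (∀ j, 0 ≤ u j ∧ u j < v j ∧ v j ≤ 1) →
        (∀ i j, i ≠ j → Set.Ioo (u i) (v i) ∩ Set.Ioo (u j) (v j) = ∅) →
        ∑ j, |f (v j) - f (u j)| ^ p / lam (j : ℕ) ≤ V) →
      (∃ W : ℝ, ∀ (s : ℕ) (u v : Fin s → ℝ),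
        (∀ j, 0 ≤ u j ∧ u j < v j ∧ v j ≤ 1) →
        (∀ i j, i ≠ j → Set.Ioo (u i) (v i) ∩ Set.Ioo (u j) (v j) = ∅) →
        ∑ j, |f (v j) - f (u j)| ^ q / gam (j : ℕ) ≤ W)) ↔
    (∃ M : ℝ, ∀ n : ℕ, 1 ≤ n →
      (∑ j ∈ range n, 1 / gam j) ^ (1 / q) / (∑ j ∈ range n, 1 / lam j) ^ (1 / p) ≤ M) := by
  have hp0 : 0 < p := one_pos.trans_le hp
  constructor
  · exact exists_ratio_le_of_forall_memWatermanBV hlam hgam hlammono hp0 (hp.trans hpq)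
  · rintro ⟨M, hM⟩ f hf
    obtain ⟨hM0, hΓΛ⟩ := partial_sums_le_of_ratio_le hlam hgam (hp0.trans_le hpq) hM
    exact MemWatermanBV.of_partial_sums_le (fun j => (hlam j).le) hgam hgammono hp0 hpq
      (Real.rpow_nonneg hM0 q) hΓΛ hf

/-- Corollary 1.5: for `1 ≤ p ≤ q < ∞` and Waterman sequences `Λ, Γ`,
`ΛBV^(p) ⊆ ΓBV^(q)` if and only if `sup_{n≥1} Γ(n)^(1/q) / Λ(n)^(1/p) < ∞`. -/
theorem embedding_constant_exponents_iff (lam gam : ℕ → ℝ)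
    (hlam : ∀ j, 0 < lam j) (hgam : ∀ j, 0 < gam j)
    (hlammono : Monotone lam) (hgammono : Monotone gam)
    (hlamdiv : Tendsto (fun n => ∑ j ∈ range n, 1 / lam j) atTop atTop)
    (hgamdiv : Tendsto (fun n => ∑ j ∈ range n, 1 / gam j) atTop atTop)
    (p q : ℝ) (hp : 1 ≤ p) (hpq : p ≤ q) :
    (∀ f : ℝ → ℝ,
      (∃ V : ℝ, ∀ (s : ℕ) (u v : Fin s → ℝ),
        (∀ j, 0 ≤ u j ∧ u j < v j ∧ v j ≤ 1) →
        (∀ i j, i ≠ j → Set.Ioo (u i) (v i) ∩ Set.Ioo (u j) (v j) = ∅) →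
        ∑ j, |f (v j) - f (u j)| ^ p / lam (j : ℕ) ≤ V) →
      (∃ W : ℝ, ∀ (s : ℕ) (u v : Fin s → ℝ),
        (∀ j, 0 ≤ u j ∧ u j < v j ∧ v j ≤ 1) →
        (∀ i j, i ≠ j → Set.Ioo (u i) (v i) ∩ Set.Ioo (u j) (v j) = ∅) →
        ∑ j, |f (v j) - f (u j)| ^ q / gam (j : ℕ) ≤ W)) ↔
    (∃ M : ℝ, ∀ n : ℕ, 1 ≤ n →
      (∑ j ∈ range n, 1 / gam j) ^ (1 / q) / (∑ j ∈ range n, 1 / lam j) ^ (1 / p) ≤ M) :=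
  embedding_constant_exponents_iff_general lam gam hlam hgam hlammono hgammono p q hp hpq
end

section
/- Let Φ be a Schramm sequence with each Φ_k(x) := ∑_{j=1}^k φ_j(x) strictly increasing, and let 1 ≤ q_n ↑ q ≤ ∞, 2 ≤ δ_n ↑ ∞. If limsup_{n→∞} max_{1≤k≤δ_n} k^{1/q_n} Φ_k^{−1}(1) < ∞, then every f of Φ-bounded variation on [0,1] belongs to BV^{(q_n↑q)}; moreover V(f; q_n↑q; δ) ≤ 16(1 + V_Φ(f)) · sup_n max_{1≤k≤δ_n} k^{1/q_n} Φ_k^{−1}(1). -/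
open Finset Filter

/-!
Sort the oscillations `b₀ ≥ b₁ ≥ ⋯` of `f` on the `s ≤ δₙ` intervals, and write `tₖ = Φₖ⁻¹(1)`,
`c = 1 + V`. The `i + 1` largest oscillations already have Φ-variation at most `V`, so
`Φ_{i+1}(bᵢ) ≤ V`; as `Φₖ` is convex and vanishes at `0`, `x / tₖ ≤ Φₖ(x)` for `x ≥ tₖ`, hence
`bᵢ ≤ c t_{i+1}`. Let `j ≤ δₙ` be the last index with `bᵢ ≤ 2c tⱼ`. If `j = ⌊δₙ⌋`, then
`bᵢ^q ≤ (2cM)^q / ⌊δₙ⌋`. Otherwise `bᵢ > 2c t_J` for `J = min(2j, ⌊δₙ⌋)`, and comparing `Φ_J(bᵢ)`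
with `Φ_{i+1}(bᵢ) ≤ V` gives `bᵢ ≤ 4j tⱼ φᵢ(bᵢ)`, so `bᵢ^q ≤ (2cM)^q (2/c) φᵢ(bᵢ)` because
`j tⱼ^q ≤ M^q`. Summing and using `∑ φᵢ(bᵢ) ≤ V` gives `∑ bᵢ^q ≤ 3 (2cM)^q`.
-/

theorem ConvexOn.div_le_apply_of_apply_eq_one {g : ℝ → ℝ} (hg : ConvexOn ℝ (Set.Ici 0) g)
    (hg0 : g 0 = 0) {t x : ℝ} (ht : 0 < t) (hgt : g t = 1) (htx : t ≤ x) : x / t ≤ g x := by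
  have hx : 0 < x := ht.trans_le htx
  have hslope := hg.secant_mono Set.self_mem_Ici ht.le hx.le ht.ne' hx.ne' htx
  simp only [hg0, hgt, sub_zero] at hslope
  rw [div_le_div_iff₀ ht hx] at hslope
  rw [div_le_iff₀ ht]
  linarith

theorem ConvexOn.le_mul_of_apply_le {g : ℝ → ℝ} (hg : ConvexOn ℝ (Set.Ici 0) g)
    (hg0 : g 0 = 0) {t x c : ℝ} (ht : 0 < t) (hgt : g t = 1) (hc : 1 ≤ c) (hgx : g x ≤ c) :
    x ≤ c * t := by
  rcases le_or_gt x t with hxt | htx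
  · nlinarith
  · have := hg.div_le_apply_of_apply_eq_one hg0 ht hgt htx.le
    rw [div_le_iff₀ ht] at this
    nlinarith

theorem Tuple.exists_perm_antitone {α : Type*} [LinearOrder α] {s : ℕ} (a : Fin s → α) :
    ∃ σ : Equiv.Perm (Fin s), Antitone (a ∘ σ) :=
  ⟨Tuple.sort (OrderDual.toDual ∘ a), fun _ _ hij => Tuple.monotone_sort (OrderDual.toDual ∘ a) hij⟩

theorem sum_sub_le_of_pairwise_disjoint_Ioo {s : ℕ} {u v : Fin s → ℝ} {a b : ℝ} (hab : a ≤ b)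
    (hmem : ∀ j, a ≤ u j ∧ u j < v j ∧ v j ≤ b)
    (hdisj : Pairwise (Function.onFun Disjoint fun j => Set.Ioo (u j) (v j))) :
    ∑ j, (v j - u j) ≤ b - a := by
  open MeasureTheory in
  have hvol : ∑ j, volume (Set.Ioo (u j) (v j)) ≤ volume (Set.Icc a b) :=
    calc ∑ j, volume (Set.Ioo (u j) (v j)) = volume (⋃ j, Set.Ioo (u j) (v j)) := by
          rw [measure_iUnion hdisj fun _ => measurableSet_Ioo]
          exact (tsum_fintype _).symm
      _ ≤ volume (Set.Icc a b) := measure_mono <| Set.iUnion_subset fun j =>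
          Set.Ioo_subset_Icc_self.trans (Set.Icc_subset_Icc (hmem j).1 (hmem j).2.2)
  simp only [Real.volume_Ioo, Real.volume_Icc] at hvol
  rwa [← ENNReal.ofReal_sum_of_nonneg fun j _ => (sub_pos.2 (hmem j).2.1).le,
    ENNReal.ofReal_le_ofReal_iff (sub_nonneg.2 hab)] at hvol

theorem natCast_le_of_pairwise_disjoint_Ioo {s : ℕ} {u v : Fin s → ℝ} {L : ℝ} (hL : 0 < L)
    (hmem : ∀ j, 0 ≤ u j ∧ u j < v j ∧ v j ≤ 1)
    (hdisj : Pairwise (Function.onFun Disjoint fun j => Set.Ioo (u j) (v j)))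
    (hlen : ∀ j, 1 / L ≤ v j - u j) : (s : ℝ) ≤ L :=
  calc (s : ℝ) = (∑ _j : Fin s, 1 / L) * L := by simp [hL.ne']
    _ ≤ (1 - 0) * L := by
      gcongr
      exact (sum_le_sum fun j _ => hlen j).trans
        (sum_sub_le_of_pairwise_disjoint_Ioo zero_le_one hmem hdisj)
    _ = L := by ring

theorem rpow_one_div_le_mul_of_le_mul_rpow {q S B C : ℝ} (hq : 1 ≤ q) (hS : 0 ≤ S) (hB : 0 ≤ B)
    (hC : 1 ≤ C) (h : S ≤ C * B ^ q) : S ^ (1 / q) ≤ C * B := by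
  have hq0 : 0 < q := zero_lt_one.trans_le hq
  calc S ^ (1 / q) ≤ (C * B ^ q) ^ (1 / q) := by gcongr
    _ = C ^ (1 / q) * B := by
      rw [Real.mul_rpow (by positivity) (by positivity), ← Real.rpow_mul hB,
        mul_one_div_cancel hq0.ne', Real.rpow_one]
    _ ≤ C * B := by
      gcongr
      exact Real.rpow_le_self_of_one_le hC (by rw [div_le_one hq0]; exact hq)

theorem mul_rpow_le_rpow_of_rpow_one_div_mul_le {k t M q : ℝ} (hk : 0 ≤ k) (ht : 0 ≤ t)
    (hq : 0 < q) (h : k ^ (1 / q) * t ≤ M) : k * t ^ q ≤ M ^ q := by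
  calc k * t ^ q = (k ^ (1 / q) * t) ^ q := by
        rw [Real.mul_rpow (by positivity) ht, ← Real.rpow_mul hk, one_div_mul_cancel hq.ne',
          Real.rpow_one]
    _ ≤ M ^ q := by gcongr

theorem rpow_le_mul_rpow_div_of_le_mul {q x A s M : ℝ} {d : ℕ} (hq : 0 < q) (hx : 0 ≤ x)
    (hA : 0 ≤ A) (hs : 0 ≤ s) (hM : 0 ≤ M) (hd : 0 < d) (hds : d * s ^ q ≤ M ^ q)
    (hxs : x ≤ A * s) : x ^ q ≤ (A * M) ^ q / d := by
  have hd' : (0 : ℝ) < d := Nat.cast_pos.2 hd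
  calc x ^ q ≤ (A * s) ^ q := by gcongr
    _ = A ^ q * s ^ q := Real.mul_rpow hA hs
    _ ≤ A ^ q * (M ^ q / d) := by gcongr; rw [le_div_iff₀ hd']; linarith
    _ = (A * M) ^ q / d := by rw [Real.mul_rpow hA hM, mul_div_assoc]

theorem rpow_le_of_le_mul_of_le_mul {q x A s a y K : ℝ} (hq : 1 ≤ q) (hx : 0 ≤ x) (hA : 0 ≤ A)
    (hs : 0 ≤ s) (h₁ : x ≤ a * s * y) (h₂ : x ≤ A * s) (h₃ : a * s ^ q ≤ K) (hy : 0 ≤ y) :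
    x ^ q ≤ A ^ (q - 1) * K * y := by
  have hsplit : ∀ z : ℝ, 0 ≤ z → z ^ q = z * z ^ (q - 1) := fun z hz => by
    conv_lhs => rw [← add_sub_cancel (1 : ℝ) q]
    rw [Real.rpow_add' hz (by linarith), Real.rpow_one]
  calc x ^ q = x * x ^ (q - 1) := hsplit x hx
    _ ≤ (a * s * y) * (A * s) ^ (q - 1) := by
      gcongr
      exact hx.trans h₁
    _ = A ^ (q - 1) * (a * s ^ q) * y := by
      rw [Real.mul_rpow hA hs, hsplit s hs]; ring
    _ ≤ A ^ (q - 1) * K * y := by gcongr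

section PartialSums

variable {φ : ℕ → ℝ → ℝ} {t : ℕ → ℝ}

theorem convexOn_sum_range (hconv : ∀ j, ConvexOn ℝ (Set.Ici 0) (φ j)) (k : ℕ) :
    ConvexOn ℝ (Set.Ici 0) (fun x => ∑ j ∈ range k, φ j x) := by
  induction k with
  | zero => simpa using convexOn_const (0 : ℝ) (convex_Ici (0 : ℝ))
  | succ k ih =>
    simp only [sum_range_succ]
    exact ih.add (hconv k)

theorem apply_nonneg_of_monotoneOn (hmono : ∀ j, MonotoneOn (φ j) (Set.Ici 0))
    (hzero : ∀ j, φ j 0 = 0) (j : ℕ) {x : ℝ} (hx : 0 ≤ x) : 0 ≤ φ j x :=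
  hzero j ▸ hmono j Set.self_mem_Ici hx hx

theorem sum_range_le_add_mul (hanti : ∀ j x, 0 < x → φ (j + 1) x ≤ φ j x) {i k J : ℕ}
    (hik : i < k) (hkJ : k ≤ J) {x : ℝ} (hx : 0 < x) :
    ∑ j ∈ range J, φ j x ≤ ∑ j ∈ range k, φ j x + ((J - k : ℕ) : ℝ) * φ i x := by
  rw [← sum_range_add_sum_Ico _ hkJ, ← nsmul_eq_mul, ← Nat.card_Ico, ← sum_const]
  gcongr with j hj
  exact antitone_nat_of_succ_le (f := (φ · x)) (fun j => hanti j x hx)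
    (hik.le.trans (mem_Ico.1 hj).1)

theorem pos_of_sum_range_eq_one (hzero : ∀ j, φ j 0 = 0)
    (ht : ∀ k, 1 ≤ k → 0 ≤ t k ∧ ∑ j ∈ range k, φ j (t k) = 1) {k : ℕ} (hk : 1 ≤ k) :
    0 < t k := by
  refine (ht k hk).1.lt_of_ne fun h => ?_
  simpa [← h, hzero] using (ht k hk).2

theorem div_le_sum_range_of_le (hconv : ∀ j, ConvexOn ℝ (Set.Ici 0) (φ j))
    (hzero : ∀ j, φ j 0 = 0) (ht : ∀ k, 1 ≤ k → 0 ≤ t k ∧ ∑ j ∈ range k, φ j (t k) = 1)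
    {k : ℕ} (hk : 1 ≤ k) {x : ℝ} (hx : t k ≤ x) : x / t k ≤ ∑ j ∈ range k, φ j x :=
  (convexOn_sum_range hconv k).div_le_apply_of_apply_eq_one (by simp [hzero])
    (pos_of_sum_range_eq_one hzero ht hk) (ht k hk).2 hx

theorem le_mul_of_sum_range_le (hconv : ∀ j, ConvexOn ℝ (Set.Ici 0) (φ j))
    (hzero : ∀ j, φ j 0 = 0) (ht : ∀ k, 1 ≤ k → 0 ≤ t k ∧ ∑ j ∈ range k, φ j (t k) = 1)
    {k : ℕ} (hk : 1 ≤ k) {x c : ℝ} (hc : 1 ≤ c) (hx : ∑ j ∈ range k, φ j x ≤ c) :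
    x ≤ c * t k :=
  (convexOn_sum_range hconv k).le_mul_of_apply_le (by simp [hzero])
    (pos_of_sum_range_eq_one hzero ht hk) (ht k hk).2 hc hx

theorem le_of_sum_range_eq_one_of_le (hmono : ∀ j, MonotoneOn (φ j) (Set.Ici 0))
    (hconv : ∀ j, ConvexOn ℝ (Set.Ici 0) (φ j)) (hzero : ∀ j, φ j 0 = 0)
    (ht : ∀ k, 1 ≤ k → 0 ≤ t k ∧ ∑ j ∈ range k, φ j (t k) = 1) {k k' : ℕ} (hk : 1 ≤ k)
    (hkk' : k ≤ k') : t k' ≤ t k := by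
  have hreindex : ∑ j ∈ range k, φ j (t k') ≤ ∑ j ∈ range k', φ j (t k') :=
    sum_le_sum_of_subset_of_nonneg (range_subset_range.2 hkk') fun j _ _ =>
      apply_nonneg_of_monotoneOn hmono hzero j (ht k' (hk.trans hkk')).1
  simpa using le_mul_of_sum_range_le hconv hzero ht hk le_rfl
    (hreindex.trans (ht k' (hk.trans hkk')).2.le)

theorem le_two_mul_mul_apply_of_le (hmono : ∀ j, MonotoneOn (φ j) (Set.Ici 0))
    (hconv : ∀ j, ConvexOn ℝ (Set.Ici 0) (φ j)) (hzero : ∀ j, φ j 0 = 0)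
    (hanti : ∀ j x, 0 < x → φ (j + 1) x ≤ φ j x)
    (ht : ∀ k, 1 ≤ k → 0 ≤ t k ∧ ∑ j ∈ range k, φ j (t k) = 1) {i J : ℕ} (hiJ : i + 1 ≤ J)
    {x V : ℝ} (htx : t J ≤ x) (hVx : 2 * V * t J ≤ x) (hxV : ∑ j ∈ range (i + 1), φ j x ≤ V) :
    x ≤ 2 * J * t J * φ i x := by
  have htJ : 0 < t J := pos_of_sum_range_eq_one hzero ht (by omega)
  have hxpos : 0 < x := htJ.trans_le htx
  have hslope := div_le_sum_range_of_le hconv hzero ht (by omega) htx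
  have hgap := sum_range_le_add_mul hanti (Nat.lt_succ_self i) hiJ hxpos
  have hφ := apply_nonneg_of_monotoneOn hmono hzero i hxpos.le
  have hJk : ((J - (i + 1) : ℕ) : ℝ) ≤ J := by exact_mod_cast Nat.sub_le J (i + 1)
  rw [div_le_iff₀ htJ] at hslope
  nlinarith [mul_le_mul_of_nonneg_right hJk hφ]

theorem rpow_le_mul_apply_of_lt (hmono : ∀ j, MonotoneOn (φ j) (Set.Ici 0))
    (hconv : ∀ j, ConvexOn ℝ (Set.Ici 0) (φ j)) (hzero : ∀ j, φ j 0 = 0)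
    (hanti : ∀ j x, 0 < x → φ (j + 1) x ≤ φ j x)
    (ht : ∀ k, 1 ≤ k → 0 ≤ t k ∧ ∑ j ∈ range k, φ j (t k) = 1) {q M c V : ℝ} {i j J : ℕ}
    (hq : 1 ≤ q) (hM0 : 0 ≤ M) (hM : j * t j ^ q ≤ M ^ q) (hc : 1 ≤ c) (hVc : V ≤ c)
    (hij : i + 1 ≤ j) (hjJ : j < J) (hJj : J ≤ 2 * j) {x : ℝ} (hx : 0 ≤ x)
    (hxV : ∑ j ∈ range (i + 1), φ j x ≤ V) (hxj : x ≤ 2 * c * t j) (hxJ : 2 * c * t J < x) :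
    x ^ q ≤ (2 * c * M) ^ q * (2 / c * φ i x) := by
  have htj := pos_of_sum_range_eq_one hzero ht (k := j) (by omega)
  have htJ := pos_of_sum_range_eq_one hzero ht (k := J) (by omega)
  have htJj := le_of_sum_range_eq_one_of_le hmono hconv hzero ht (by omega) hjJ.le
  have hesc := le_two_mul_mul_apply_of_le hmono hconv hzero hanti ht (J := J) (by omega)
    (by nlinarith) (by nlinarith) hxV
  have hJ2j : (J : ℝ) ≤ 2 * j := by exact_mod_cast hJj
  have hφ := apply_nonneg_of_monotoneOn hmono hzero i hx
  have hxφ : x ≤ 4 * j * t j * φ i x := by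
    have : (J : ℝ) * t J ≤ 2 * j * t j := by gcongr
    nlinarith
  calc x ^ q ≤ (2 * c) ^ (q - 1) * (4 * M ^ q) * φ i x :=
        rpow_le_of_le_mul_of_le_mul hq hx (by linarith) htj.le hxφ hxj (by linarith) hφ
    _ = (2 * c * M) ^ q * (2 / c * φ i x) := by
      rw [Real.rpow_sub_one (by positivity), Real.mul_rpow (by linarith) hM0]
      field_simp
      ring

theorem rpow_le_of_sum_range_le (hmono : ∀ j, MonotoneOn (φ j) (Set.Ici 0))
    (hconv : ∀ j, ConvexOn ℝ (Set.Ici 0) (φ j)) (hzero : ∀ j, φ j 0 = 0)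
    (hanti : ∀ j x, 0 < x → φ (j + 1) x ≤ φ j x)
    (ht : ∀ k, 1 ≤ k → 0 ≤ t k ∧ ∑ j ∈ range k, φ j (t k) = 1) {q M c V : ℝ} {d : ℕ}
    (hq : 1 ≤ q) (hM0 : 0 ≤ M) (hM : ∀ k : ℕ, 1 ≤ k → k ≤ d → k * t k ^ q ≤ M ^ q)
    (hc : 1 ≤ c) (hVc : V ≤ c) {i : ℕ} (hid : i + 1 ≤ d) {x : ℝ} (hx : 0 ≤ x)
    (hxV : ∑ j ∈ range (i + 1), φ j x ≤ V) :
    x ^ q ≤ (2 * c * M) ^ q * (1 / d + 2 / c * φ i x) := by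
  have hφ := apply_nonneg_of_monotoneOn hmono hzero i hx
  have hxi : x ≤ 2 * c * t (i + 1) := by
    have := le_mul_of_sum_range_le hconv hzero ht (Nat.le_add_left 1 i) hc (hxV.trans hVc)
    nlinarith [pos_of_sum_range_eq_one hzero ht (Nat.le_add_left 1 i)]
  obtain ⟨j, hij, hjd, hxj, hlast⟩ : ∃ j, i + 1 ≤ j ∧ j ≤ d ∧ x ≤ 2 * c * t j ∧
      ∀ k, j < k → k ≤ d → 2 * c * t k < x :=
    ⟨_, Nat.le_findGreatest hid hxi, Nat.findGreatest_le d,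
      Nat.findGreatest_spec (P := fun k => x ≤ 2 * c * t k) hid hxi,
      fun k hjk hkd => not_le.1 (Nat.findGreatest_is_greatest hjk hkd)⟩
  rcases hjd.eq_or_lt with rfl | hjd
  · calc x ^ q ≤ (2 * c * M) ^ q / j :=
          rpow_le_mul_rpow_div_of_le_mul (by linarith) hx (by linarith)
            (pos_of_sum_range_eq_one hzero ht (by omega)).le hM0 (by omega)
            (hM j (by omega) le_rfl) hxj
      _ ≤ (2 * c * M) ^ q * (1 / j + 2 / c * φ i x) := by
        rw [div_eq_mul_one_div]
        gcongr
        exact le_add_of_nonneg_right (by positivity)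
  · calc x ^ q ≤ (2 * c * M) ^ q * (2 / c * φ i x) :=
          rpow_le_mul_apply_of_lt hmono hconv hzero hanti ht hq hM0 (hM j (by omega) hjd.le) hc
            hVc hij (by omega) (min_le_left _ _) hx hxV hxj
            (hlast _ (by omega) (min_le_right _ _))
      _ ≤ (2 * c * M) ^ q * (1 / d + 2 / c * φ i x) := by
        gcongr
        exact le_add_of_nonneg_left (by positivity)

theorem sum_rpow_le_of_sum_range_le (hmono : ∀ j, MonotoneOn (φ j) (Set.Ici 0))
    (hconv : ∀ j, ConvexOn ℝ (Set.Ici 0) (φ j)) (hzero : ∀ j, φ j 0 = 0)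
    (hanti : ∀ j x, 0 < x → φ (j + 1) x ≤ φ j x)
    (ht : ∀ k, 1 ≤ k → 0 ≤ t k ∧ ∑ j ∈ range k, φ j (t k) = 1) {q M c V : ℝ} {d s : ℕ}
    (hq : 1 ≤ q) (hM0 : 0 ≤ M) (hM : ∀ k : ℕ, 1 ≤ k → k ≤ d → (k : ℝ) ^ (1 / q) * t k ≤ M)
    (hc : 1 ≤ c) (hVc : V ≤ c) (hsd : s ≤ d) {b : Fin s → ℝ} (hb : ∀ i, 0 ≤ b i)
    (hprefix : ∀ i : Fin s, ∑ j ∈ range (i + 1), φ j (b i) ≤ V)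
    (hsum : ∑ i : Fin s, φ i (b i) ≤ V) :
    ∑ i, b i ^ q ≤ 3 * (2 * c * M) ^ q := by
  have hc0 : 0 < c := by linarith
  have hMq : ∀ k : ℕ, 1 ≤ k → k ≤ d → k * t k ^ q ≤ M ^ q := fun k hk hkd =>
    mul_rpow_le_rpow_of_rpow_one_div_mul_le k.cast_nonneg (ht k hk).1 (by linarith) (hM k hk hkd)
  calc ∑ i, b i ^ q ≤ ∑ i : Fin s, (2 * c * M) ^ q * (1 / d + 2 / c * φ i (b i)) :=
        sum_le_sum fun i _ => rpow_le_of_sum_range_le hmono hconv hzero hanti ht hq hM0 hMq hc hVc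
          (i.isLt.trans_le hsd) (hb i) (hprefix i)
    _ = (2 * c * M) ^ q * (s / d + 2 / c * ∑ i : Fin s, φ i (b i)) := by
      rw [← mul_sum, sum_add_distrib, ← mul_sum]
      simp [div_eq_mul_one_div (s : ℝ)]
    _ ≤ (2 * c * M) ^ q * (1 + 2) := by
      gcongr
      · exact div_le_one_of_le₀ (by exact_mod_cast hsd) (Nat.cast_nonneg d)
      · calc 2 / c * ∑ i : Fin s, φ i (b i) ≤ 2 / c * c := by gcongr; exact hsum.trans hVc
          _ = 2 := by field_simp
    _ = 3 * (2 * c * M) ^ q := by ring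

end PartialSums

theorem sum_range_succ_le_sum_castLE {φ : ℕ → ℝ → ℝ} (hmono : ∀ j, MonotoneOn (φ j) (Set.Ici 0))
    {s : ℕ} {b : Fin s → ℝ} (hb : Antitone b) (i : Fin s) (hbi : 0 ≤ b i) :
    ∑ j ∈ range (i + 1), φ j (b i) ≤ ∑ j : Fin (i + 1), φ j (b (Fin.castLE i.isLt j)) := by
  rw [← Fin.sum_univ_eq_sum_range]
  gcongr with j
  have hji : Fin.castLE i.isLt j ≤ i := Fin.le_def.2 (Nat.lt_succ_iff.1 j.isLt)
  exact hmono j hbi (hbi.trans (hb hji)) (hb hji)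

theorem schramm_embedding_sufficiency_general (φ : ℕ → ℝ → ℝ)
    (hmono : ∀ j, MonotoneOn (φ j) (Set.Ici 0))
    (hconv : ∀ j, ConvexOn ℝ (Set.Ici 0) (φ j))
    (hzero : ∀ j, φ j 0 = 0)
    (hord : ∀ j, ∀ x : ℝ, 0 < x → 0 < φ (j + 1) x ∧ φ (j + 1) x ≤ φ j x)
    (inv : ℕ → ℝ)
    (hinv : ∀ k : ℕ, 1 ≤ k → 0 ≤ inv k ∧ ∑ j ∈ range k, φ j (inv k) = 1)
    (qs : ℕ → ℝ) (hqs1 : ∀ n, 1 ≤ qs n)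
    (δ : ℕ → ℝ) (hδ2 : ∀ n, 2 ≤ δ n)
    (M : ℝ)
    (hM : ∀ (n k : ℕ), 1 ≤ k → (k : ℝ) ≤ δ n → (k : ℝ) ^ (1 / qs n) * inv k ≤ M)
    (f : ℝ → ℝ) (V : ℝ)
    (hVf : ∀ (s : ℕ) (u v : Fin s → ℝ),
      (∀ j, 0 ≤ u j ∧ u j < v j ∧ v j ≤ 1) →
      (∀ i j, i ≠ j → Set.Ioo (u i) (v i) ∩ Set.Ioo (u j) (v j) = ∅) →
      ∑ j, φ j.1 |f (v j) - f (u j)| ≤ V) :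
    ∀ (n : ℕ) (s : ℕ) (u v : Fin s → ℝ),
      (∀ j, 0 ≤ u j ∧ u j < v j ∧ v j ≤ 1) →
      (∀ i j, i ≠ j → Set.Ioo (u i) (v i) ∩ Set.Ioo (u j) (v j) = ∅) →
      (∀ j, 1 / δ n ≤ v j - u j) →
      (∑ j, |f (v j) - f (u j)| ^ (qs n)) ^ (1 / qs n) ≤ 16 * (1 + V) * M := by
  intro n s u v hmem hdisj hlen
  have hδ0 : 0 < δ n := by linarith [hδ2 n]
  set a : Fin s → ℝ := fun j => |f (v j) - f (u j)|
  obtain ⟨σ, hσ⟩ := Tuple.exists_perm_antitone a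
  have hreindex : ∀ m (e : Fin m → Fin s), e.Injective → ∑ j : Fin m, φ j (a (σ (e j))) ≤ V :=
    fun m e he => hVf m (u ∘ σ ∘ e) (v ∘ σ ∘ e) (fun j => hmem _)
      fun i j hij => hdisj _ _ ((σ.injective.comp he).ne hij)
  have hV : 0 ≤ V := by simpa using hreindex 0 Fin.elim0 fun i => i.elim0
  have hM0 : 0 ≤ M :=
    (hinv 1 le_rfl).1.trans (by simpa using hM n 1 le_rfl (by norm_num; linarith [hδ2 n]))
  have hsd : s ≤ ⌊δ n⌋₊ := Nat.le_floor <| natCast_le_of_pairwise_disjoint_Ioo hδ0 hmem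
    (fun i j hij => Set.disjoint_iff_inter_eq_empty.2 (hdisj i j hij)) hlen
  have hsum := sum_rpow_le_of_sum_range_le hmono hconv hzero (fun j x hx => (hord j x hx).2) hinv
    (hqs1 n) hM0 (fun k hk hkd => hM n k hk ((Nat.cast_le.2 hkd).trans (Nat.floor_le hδ0.le)))
    (c := 1 + V) (by linarith) (by linarith) hsd (b := a ∘ σ) (fun i => abs_nonneg _)
    (fun i => (sum_range_succ_le_sum_castLE hmono hσ i (abs_nonneg _)).trans
      (hreindex _ _ (Fin.castLE_injective _)))
    (hreindex s id Function.injective_id)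
  calc (∑ j, a j ^ qs n) ^ (1 / qs n) = (∑ i, (a ∘ σ) i ^ qs n) ^ (1 / qs n) := by
        rw [← Equiv.sum_comp σ]; rfl
    _ ≤ 3 * (2 * (1 + V) * M) := rpow_one_div_le_mul_of_le_mul_rpow (hqs1 n)
        (sum_nonneg fun i _ => Real.rpow_nonneg (abs_nonneg _) _) (by positivity) (by norm_num) hsum
    _ ≤ 16 * (1 + V) * M := by nlinarith

/-- Sufficiency in Theorem 1.8: let `Φ` be a Schramm sequence with each
`Φ_k(x) = ∑_{j=1}^k φⱼ(x)` strictly increasing, and `1 ≤ qₙ ↑ q`, `2 ≤ δₙ ↑ ∞`. If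
`sup_n max_{1≤k≤δₙ} k^(1/qₙ) Φ_k⁻¹(1) ≤ M < ∞`, then every `f` of `Φ`-bounded variation
(with `V_Φ(f) ≤ V`) lies in `BV^(qₙ↑q)`, with `V(f; qₙ↑q; δ) ≤ 16(1+V)·M`. -/
theorem schramm_embedding_sufficiency (φ : ℕ → ℝ → ℝ)
    (hmono : ∀ j, MonotoneOn (φ j) (Set.Ici 0))
    (hconv : ∀ j, ConvexOn ℝ (Set.Ici 0) (φ j))
    (hzero : ∀ j, φ j 0 = 0)
    (hord : ∀ j, ∀ x : ℝ, 0 < x → 0 < φ (j + 1) x ∧ φ (j + 1) x ≤ φ j x)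
    (hdivg : ∀ x : ℝ, 0 < x →
      Tendsto (fun k => ∑ j ∈ range k, φ j x) atTop atTop)
    (hstrict : ∀ k : ℕ, 1 ≤ k →
      StrictMonoOn (fun x => ∑ j ∈ range k, φ j x) (Set.Ici 0))
    (inv : ℕ → ℝ)
    (hinv : ∀ k : ℕ, 1 ≤ k → 0 ≤ inv k ∧ ∑ j ∈ range k, φ j (inv k) = 1)
    (qs : ℕ → ℝ) (hqs1 : ∀ n, 1 ≤ qs n) (hqsmono : Monotone qs)
    (δ : ℕ → ℝ) (hδ2 : ∀ n, 2 ≤ δ n) (hδmono : Monotone δ) (hδdiv : Tendsto δ atTop atTop)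
    (M : ℝ)
    (hM : ∀ (n k : ℕ), 1 ≤ k → (k : ℝ) ≤ δ n → (k : ℝ) ^ (1 / qs n) * inv k ≤ M)
    (f : ℝ → ℝ) (V : ℝ)
    (hVf : ∀ (s : ℕ) (u v : Fin s → ℝ),
      (∀ j, 0 ≤ u j ∧ u j < v j ∧ v j ≤ 1) →
      (∀ i j, i ≠ j → Set.Ioo (u i) (v i) ∩ Set.Ioo (u j) (v j) = ∅) →
      ∑ j, φ j.1 |f (v j) - f (u j)| ≤ V) :
    ∀ (n : ℕ) (s : ℕ) (u v : Fin s → ℝ),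
      (∀ j, 0 ≤ u j ∧ u j < v j ∧ v j ≤ 1) →
      (∀ i j, i ≠ j → Set.Ioo (u i) (v i) ∩ Set.Ioo (u j) (v j) = ∅) →
      (∀ j, 1 / δ n ≤ v j - u j) →
      (∑ j, |f (v j) - f (u j)| ^ (qs n)) ^ (1 / qs n) ≤ 16 * (1 + V) * M :=
  schramm_embedding_sufficiency_general φ hmono hconv hzero hord inv hinv qs hqs1 δ hδ2 M hM f V hVf
end
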